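/- Let n ≥ 2, let u, v ∈ S_n, and let a ∈ {1,...,n}^{n−1} be a sequence with u[i] ≤_{a_i} v[i] for all i ∈ {1,...,n−1}. Then the open tilted Richardson variety is the intersection of the tilted Richardson variety with two permuted opposite Schubert cells: T°_{u,v,a} = {F ∈ T_{u,v,a} : P_{u[k]}(F) ≠ 0 and P_{v[k]}(F) ≠ 0 for all k ∈ {1,...,n−1}}. -/

import Mathlib

/-- Number of inversions of a permutation of `Fin n`. -/
def invNum {n : ℕ} (w : Equiv.Perm (Fin n)) : ℕ :=
  (Finset.univ.filter (fun p : Fin n × Fin n => p.1 < p.2 ∧ w p.2 < w p.1)).card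

/-- Directed edge of the quantum Bruhat graph `Γ_n`. -/
def qbEdge {n : ℕ} (w w' : Equiv.Perm (Fin n)) : Prop :=
  ∃ i j : Fin n, i < j ∧ w' = w * Equiv.swap i j ∧
    (invNum w' = invNum w + 1 ∨ invNum w' + 2 * (j.val - i.val) = invNum w + 1)

/-- Directed edge of the quantum Bruhat graph together with its weight vector in `ℤ^{n-1}`;
coordinate `m : Fin (n-1)` corresponds to the variable `q_{m+1}` (1-indexed). -/
def qbEdgeWt {n : ℕ} (w w' : Equiv.Perm (Fin n)) (c : Fin (n - 1) → ℤ) : Prop :=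
  ∃ i j : Fin n, i < j ∧ w' = w * Equiv.swap i j ∧
    ((invNum w' = invNum w + 1 ∧ c = 0) ∨
     (invNum w' + 2 * (j.val - i.val) = invNum w + 1 ∧
      c = fun m => if i.val ≤ m.val ∧ m.val < j.val then 1 else 0))

/-- Directed paths in the quantum Bruhat graph from `u` to `v`,
recording the number of edges and the total weight. -/
inductive qbPathWt {n : ℕ} :
    Equiv.Perm (Fin n) → Equiv.Perm (Fin n) → ℕ → (Fin (n - 1) → ℤ) → Prop
  | refl (u : Equiv.Perm (Fin n)) : qbPathWt u u 0 0
  | step {u w v : Equiv.Perm (Fin n)} {len : ℕ} {c c' : Fin (n - 1) → ℤ} :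
      qbEdgeWt u w c → qbPathWt w v len c' → qbPathWt u v (len + 1) (c + c')

/-- `ℓ(u,v)`: minimal number of edges of a directed path from `u` to `v` in `Γ_n`. -/
noncomputable def qbDist {n : ℕ} (u v : Equiv.Perm (Fin n)) : ℕ :=
  sInf {k | ∃ c, qbPathWt u v k c}

/-- `depth(A,B)`: max over `0 ≤ x ≤ n` of `#(B ∩ {1,…,x}) − #(A ∩ {1,…,x})`
(`Fin n` is 0-indexed, so `{1,…,x}` corresponds to `val < x`). -/
def depthAB {n : ℕ} (A B : Finset (Fin n)) : ℕ :=
  (Finset.range (n + 1)).sup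
    (fun x => (B.filter (fun b => b.val < x)).card - (A.filter (fun a => a.val < x)).card)

/-- `w[k] = {w(1),…,w(k)}`. -/
def permSet {n : ℕ} (w : Equiv.Perm (Fin n)) (k : ℕ) : Finset (Fin n) :=
  (Finset.univ.filter (fun i : Fin n => i.val < k)).image w

/-- The Gale order on subsets of `Fin n` (componentwise comparison of sorted lists). -/
def galeLE {n : ℕ} (A B : Finset (Fin n)) : Prop :=
  A.card = B.card ∧ ∀ (k : ℕ) (hA : A.card = k) (hB : B.card = k) (t : Fin k),
    A.orderEmbOfFin hA t ≤ B.orderEmbOfFin hB t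

/-- The shifted Gale order `≤_r`; `r : Fin n` encodes the paper's `r = r.val + 1`, and
`x ≤_r y` iff `x - r ≤ y - r` in `Fin n`. -/
def shiftedGaleLE {n : ℕ} (r : Fin n) (A B : Finset (Fin n)) : Prop :=
  galeLE (A.image (fun x => x - r)) (B.image (fun x => x - r))

/-- The closed cyclic interval `[a,b]_c` in `Fin n`. -/
def cycIcc {n : ℕ} (a b : Fin n) : Finset (Fin n) :=
  Finset.univ.filter (fun x => (x - a).val ≤ (b - a).val)

/-- The half-open cyclic interval `[a,b)_c` in `Fin n`. -/
def cycIco {n : ℕ} (a b : Fin n) : Finset (Fin n) :=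
  Finset.univ.filter (fun x => (x - a).val < (b - a).val)

/-- A complete flag in `ℂ^n`: a chain `F_0 ⊆ F_1 ⊆ ⋯ ⊆ F_n` with `dim F_i = i`. -/
structure CompleteFlag (n : ℕ) where
  space : ℕ → Submodule ℂ (Fin n → ℂ)
  mono : Monotone space
  dim_eq : ∀ i, i ≤ n → Module.finrank ℂ (space i) = i

/-- The coordinate projection `Proj_S` (zeroing out coordinates outside `S`). -/
noncomputable def projS {n : ℕ} (S : Finset (Fin n)) : (Fin n → ℂ) →ₗ[ℂ] (Fin n → ℂ) :=
  LinearMap.pi (fun i => if i ∈ S then LinearMap.proj i else 0)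

/-- `dim Proj_S (V)`. -/
noncomputable def projDim {n : ℕ} (S : Finset (Fin n)) (V : Submodule ℂ (Fin n → ℂ)) : ℕ :=
  Module.finrank ℂ (V.map (projS S))

/-- Membership in the tilted Richardson variety `T_{u,v,a}` (rank conditions, `≤`). -/
def memT {n : ℕ} [NeZero n] (u v : Equiv.Perm (Fin n)) (a : ℕ → Fin n)
    (F : CompleteFlag n) : Prop :=
  ∀ i : ℕ, 1 ≤ i → i ≤ n - 1 → ∀ j : Fin n,
    projDim (cycIcc (a i) j) (F.space i) ≤ (permSet u i ∩ cycIcc (a i) j).card ∧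
    projDim (cycIcc j (a i - 1)) (F.space i) ≤ (permSet v i ∩ cycIcc j (a i - 1)).card

/-- Membership in the open tilted Richardson variety `T°_{u,v,a}` (rank conditions, `=`). -/
def memT0 {n : ℕ} [NeZero n] (u v : Equiv.Perm (Fin n)) (a : ℕ → Fin n)
    (F : CompleteFlag n) : Prop :=
  ∀ i : ℕ, 1 ≤ i → i ≤ n - 1 → ∀ j : Fin n,
    projDim (cycIcc (a i) j) (F.space i) = (permSet u i ∩ cycIcc (a i) j).card ∧
    projDim (cycIcc j (a i - 1)) (F.space i) = (permSet v i ∩ cycIcc j (a i - 1)).card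

/-- `M` is a matrix representative of the flag `F`: the first `i` columns span `F_i`. -/
def IsFlagMatrix {n : ℕ} (F : CompleteFlag n) (M : Matrix (Fin n) (Fin n) ℂ) : Prop :=
  ∀ i : ℕ, i ≤ n →
    Submodule.span ℂ ((fun j : Fin n => M.transpose j) '' {j : Fin n | j.val < i}) = F.space i

/-- The Plücker minor `P_I(M)`: the determinant of the submatrix of `M` on rows `I`
and the first `#I` columns. -/
noncomputable def minorP {n : ℕ} (M : Matrix (Fin n) (Fin n) ℂ) (I : Finset (Fin n)) : ℂ :=
  Matrix.det (M.submatrix (fun t : Fin I.card => I.orderEmbOfFin rfl t)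
    (fun t : Fin I.card => Fin.castLE (by simpa using I.card_le_univ) t))

/-- The sequence `a` is flat for `(u,v)`. -/
def IsFlat {n : ℕ} (u v : Equiv.Perm (Fin n)) (a : ℕ → Fin n) : Prop :=
  (∀ k, 1 ≤ k → k ≤ n - 1 → shiftedGaleLE (a k) (permSet u k) (permSet v k)) ∧
  (∀ k, 2 ≤ k → k ≤ n - 1 → shiftedGaleLE (a k) (permSet u (k - 1)) (permSet v (k - 1)))

/-- The tilted Rothe diagram `D_a^↓(u)`; the pair `(i,k) : Fin n × Fin n` encodes the
paper's pair `(i.val + 1, k.val + 1)`. -/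
def Ddown {n : ℕ} (a : ℕ → Fin n) (u : Equiv.Perm (Fin n)) : Finset (Fin n × Fin n) :=
  Finset.univ.filter (fun p : Fin n × Fin n =>
    p.2.val < n - 1 ∧ (p.1 - a (p.2.val + 1)).val < (u p.2 - a (p.2.val + 1)).val ∧
      p.2.val < (u⁻¹ p.1).val)

/-- The tilted Rothe diagram `D_a^↑(v)`. -/
def Dup {n : ℕ} (a : ℕ → Fin n) (v : Equiv.Perm (Fin n)) : Finset (Fin n × Fin n) :=
  Finset.univ.filter (fun p : Fin n × Fin n =>
    p.2.val < n - 1 ∧ (v p.2 - a (p.2.val + 1)).val < (p.1 - a (p.2.val + 1)).val ∧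
      p.2.val < (v⁻¹ p.1).val)

/-- Membership in the cyclically rotated Grassmannian Richardson variety `R_{I,J,r}`. -/
def memR {n : ℕ} [NeZero n] (I J : Finset (Fin n)) (r : Fin n)
    (V : Submodule ℂ (Fin n → ℂ)) : Prop :=
  ∀ j : Fin n,
    projDim (cycIcc r j) V ≤ (I ∩ cycIcc r j).card ∧
    projDim (cycIcc j (r - 1)) V ≤ (J ∩ cycIcc j (r - 1)).card

open Submodule Module

noncomputable section

def rvec {n : ℕ} (M : Matrix (Fin n) (Fin n) ℂ) (i : ℕ) (r : Fin n) : Fin n → ℂ :=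
  fun c => if c.val < i then M r c else 0

def rrk {n : ℕ} (M : Matrix (Fin n) (Fin n) ℂ) (i : ℕ) (S : Finset (Fin n)) : ℕ :=
  finrank ℂ (span ℂ (rvec M i '' (S : Set (Fin n))))

variable {n : ℕ} {M : Matrix (Fin n) (Fin n) ℂ} {i : ℕ}

lemma rrk_empty : rrk M i ∅ = 0 := by
  simp [rrk]

lemma rrk_mono {S T : Finset (Fin n)} (h : S ⊆ T) : rrk M i S ≤ rrk M i T :=
  Submodule.finrank_mono (span_mono (Set.image_mono (Finset.coe_subset.2 h)))

lemma rrk_insert_le {S : Finset (Fin n)} {x : Fin n} :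
    rrk M i (insert x S) ≤ rrk M i S + 1 := by
  classical
  have h1 : rrk M i (insert x S) =
      finrank ℂ ↥(span ℂ {rvec M i x} ⊔ span ℂ (rvec M i '' (S : Set (Fin n)))) := by
    rw [rrk, Finset.coe_insert, Set.image_insert_eq, Submodule.span_insert]
  have h2 := Submodule.finrank_sup_add_finrank_inf_eq (span ℂ {rvec M i x})
    (span ℂ (rvec M i '' (S : Set (Fin n))))
  have h3 : finrank ℂ ↥(span ℂ ({rvec M i x} : Set (Fin n → ℂ))) ≤ 1 := by
    by_cases hx : rvec M i x = 0
    · rw [hx, Submodule.span_zero_singleton]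
      simp
    · rw [finrank_span_singleton hx]
  rw [h1, rrk]
  omega

lemma rrk_insert_step {S A : Finset (Fin n)} {x : Fin n}
    (h : rrk M i S < rrk M i (insert x S)) (hAS : A ⊆ S) :
    rrk M i (insert x A) = rrk M i A + 1 := by
  classical
  have h1 : rrk M i (insert x A) ≤ rrk M i A + 1 := rrk_insert_le
  have h2 : rrk M i A ≤ rrk M i (insert x A) := rrk_mono (Finset.subset_insert _ _)
  have h3 : rrk M i (insert x A) ≠ rrk M i A := by
    intro heq
    have hle : span ℂ (rvec M i '' (A : Set (Fin n))) ≤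
        span ℂ (rvec M i '' ((insert x A : Finset (Fin n)) : Set (Fin n))) :=
      span_mono (Set.image_mono (Finset.coe_subset.2 (Finset.subset_insert _ _)))
    have heq' := Submodule.eq_of_le_of_finrank_le hle (le_of_eq heq)
    have hx : rvec M i x ∈ span ℂ (rvec M i '' (A : Set (Fin n))) := by
      rw [heq']
      exact subset_span (Set.mem_image_of_mem _ (by simp))
    have hx2 : rvec M i x ∈ span ℂ (rvec M i '' (S : Set (Fin n))) :=
      span_mono (Set.image_mono (Finset.coe_subset.2 hAS)) hx
    have heqS : rrk M i (insert x S) = rrk M i S := by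
      rw [rrk, Finset.coe_insert, Set.image_insert_eq, Submodule.span_insert_eq_span hx2, rrk]
    omega
  omega

lemma rrk_union_le (S D : Finset (Fin n)) : rrk M i (S ∪ D) ≤ rrk M i S + D.card := by
  classical
  induction D using Finset.induction_on with
  | empty => simp
  | insert d D' hd ih =>
    rw [Finset.union_insert]
    calc rrk M i (insert d (S ∪ D')) ≤ rrk M i (S ∪ D') + 1 := rrk_insert_le
      _ ≤ rrk M i S + D'.card + 1 := by omega
      _ = rrk M i S + (insert d D').card := by rw [Finset.card_insert_of_notMem hd]; omega

lemma rrk_eq_of_basis {B : Finset (Fin n)} (hB : rrk M i B = B.card)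
    {S : Finset (Fin n)} (hle : rrk M i S ≤ (B ∩ S).card) :
    rrk M i S = (B ∩ S).card := by
  classical
  have h1 : (B ∩ S) ∪ (B \ S) = B := by
    rw [Finset.union_comm, Finset.sdiff_union_inter]
  have h2 : rrk M i B ≤ rrk M i (B ∩ S) + (B \ S).card := by
    calc rrk M i B = rrk M i ((B ∩ S) ∪ (B \ S)) := by rw [h1]
      _ ≤ rrk M i (B ∩ S) + (B \ S).card := rrk_union_le _ _
  have h3 : (B ∩ S).card + (B \ S).card = B.card := Finset.card_inter_add_card_sdiff B S
  have h4 : rrk M i (B ∩ S) ≤ rrk M i S := rrk_mono (Finset.inter_subset_right)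
  omega

lemma rrk_chain (B : Finset (Fin n)) (C : ℕ → Finset (Fin n)) (hC0 : C 0 = ∅)
    (hCs : ∀ t, t < n → ∃ x ∉ C t, C (t + 1) = insert x (C t))
    (hrk : ∀ t, t ≤ n → rrk M i (C t) = (B ∩ C t).card) :
    ∀ t, t ≤ n → rrk M i (B ∩ C t) = (B ∩ C t).card := by
  classical
  intro t
  induction t with
  | zero => intro _; simp [hC0, rrk_empty]
  | succ t ih =>
    intro ht
    obtain ⟨x, hx, hCt⟩ := hCs t (by omega)
    by_cases hxB : x ∈ B
    · have hBC : B ∩ C (t + 1) = insert x (B ∩ C t) := by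
        rw [hCt, Finset.inter_comm, Finset.insert_inter_of_mem hxB, Finset.inter_comm]
      have hxBC : x ∉ B ∩ C t := fun h => hx (Finset.mem_of_mem_inter_right h)
      have hcard : (B ∩ C (t + 1)).card = (B ∩ C t).card + 1 := by
        rw [hBC, Finset.card_insert_of_notMem hxBC]
      have hlt : rrk M i (C t) < rrk M i (insert x (C t)) := by
        rw [← hCt]
        rw [hrk t (by omega), hrk (t + 1) (by omega)]
        omega
      rw [hBC, rrk_insert_step hlt Finset.inter_subset_right, ih (by omega),
        Finset.card_insert_of_notMem hxBC]
    · have hBC : B ∩ C (t + 1) = B ∩ C t := by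
        rw [hCt, Finset.inter_comm, Finset.insert_inter_of_notMem hxB, Finset.inter_comm]
      rw [hBC]
      exact ih (by omega)

end

lemma fin_sub_val {n : ℕ} (p q : Fin n) :
    (p - q).val = if q.val ≤ p.val then p.val - q.val else n + p.val - q.val := by
  have hp := p.isLt; have hq := q.isLt
  rw [Fin.sub_def]
  simp only
  split_ifs with h
  · rw [show n - q.val + p.val = (p.val - q.val) + n by omega, Nat.add_mod_right,
      Nat.mod_eq_of_lt (by omega)]
  · rw [Nat.mod_eq_of_lt (by omega)]; omega

lemma fin_add_val {n : ℕ} (p q : Fin n) :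
    (p + q).val = if p.val + q.val < n then p.val + q.val else p.val + q.val - n := by
  have hp := p.isLt; have hq := q.isLt
  rw [Fin.add_def]
  simp only
  split_ifs with h
  · exact Nat.mod_eq_of_lt h
  · rw [Nat.mod_eq_sub_mod (by omega), Nat.mod_eq_of_lt (by omega)]

lemma fin_add_sub_cancel {n : ℕ} (a b : Fin n) : a + b - a = b := by
  apply Fin.ext
  rw [fin_sub_val, fin_add_val]
  have := a.isLt; have := b.isLt
  split_ifs <;> omega

lemma fin_eq_add_iff_sub_val {n : ℕ} (a x : Fin n) (m : ℕ) (hm : m < n) :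
    x = a + ⟨m, hm⟩ ↔ (x - a).val = m := by
  constructor
  · rintro rfl; rw [fin_add_sub_cancel]
  · intro h
    have hx := x.isLt; have ha := a.isLt
    apply Fin.ext
    rw [fin_add_val] at *
    rw [fin_sub_val] at h
    simp only at *
    split_ifs at h ⊢ <;> omega
section chains
variable {n : ℕ}

/-- Nested chain of initial cyclic intervals starting at `a`. -/
def SuC (a : Fin n) (t : ℕ) : Finset (Fin n) :=
  Finset.univ.filter fun x => (x - a).val < t

/-- Nested chain of final cyclic intervals ending at `a - 1`. -/
def CvC (a : Fin n) (t : ℕ) : Finset (Fin n) :=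
  Finset.univ.filter fun x => n - t ≤ (x - a).val

lemma SuC_zero (a : Fin n) : SuC a 0 = ∅ := by
  simp [SuC]

lemma SuC_top (a : Fin n) : SuC a n = Finset.univ := by
  simp only [SuC]
  apply Finset.filter_true_of_mem
  intro x _
  exact (x - a).isLt

lemma SuC_succ (a : Fin n) (t : ℕ) (ht : t < n) :
    SuC a (t + 1) = insert (a + ⟨t, ht⟩) (SuC a t) := by
  ext x
  simp only [SuC, Finset.mem_filter, Finset.mem_univ, true_and, Finset.mem_insert]
  rw [fin_eq_add_iff_sub_val a x t ht]
  omega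

lemma SuC_not_mem (a : Fin n) (t : ℕ) (ht : t < n) : a + ⟨t, ht⟩ ∉ SuC a t := by
  simp only [SuC, Finset.mem_filter, Finset.mem_univ, true_and, fin_add_sub_cancel]
  omega

lemma SuC_eq_cycIcc (a : Fin n) (t : ℕ) (h1 : 1 ≤ t) (h2 : t ≤ n) :
    cycIcc a (a + ⟨t - 1, by omega⟩) = SuC a t := by
  ext x
  simp only [cycIcc, SuC, Finset.mem_filter, Finset.mem_univ, true_and, fin_add_sub_cancel]
  omega

lemma CvC_zero (a : Fin n) : CvC a 0 = ∅ := by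
  ext x
  simp only [CvC, Finset.mem_filter, Finset.mem_univ, true_and, Finset.notMem_empty, iff_false]
  have := (x - a).isLt
  omega

lemma CvC_top (a : Fin n) (hn : 0 < n) : CvC a n = Finset.univ := by
  simp only [CvC]
  apply Finset.filter_true_of_mem
  intro x _
  omega

lemma CvC_succ (a : Fin n) (t : ℕ) (ht : t < n) :
    CvC a (t + 1) = insert (a + ⟨n - 1 - t, by omega⟩) (CvC a t) := by
  ext x
  simp only [CvC, Finset.mem_filter, Finset.mem_univ, true_and, Finset.mem_insert]
  rw [fin_eq_add_iff_sub_val a x (n - 1 - t) (by omega)]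
  have := (x - a).isLt
  omega

lemma CvC_not_mem (a : Fin n) (t : ℕ) (ht : t < n) :
    a + ⟨n - 1 - t, by omega⟩ ∉ CvC a t := by
  simp only [CvC, Finset.mem_filter, Finset.mem_univ, true_and, fin_add_sub_cancel]
  omega

lemma fin_sub_add_eq {n : ℕ} (z a s : Fin n) : z - (a + s) = z - a - s := by
  apply Fin.ext
  have := z.isLt; have := a.isLt; have := s.isLt; have := (z - a).isLt
  rw [fin_sub_val, fin_add_val, fin_sub_val (z - a) s, fin_sub_val z a]
  split_ifs <;> omega

lemma CvC_eq_cycIcc [NeZero n] (a : Fin n) (t : ℕ) (hn2 : 2 ≤ n) (h1 : 1 ≤ t) (h2 : t ≤ n) :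
    cycIcc (a + ⟨n - t, by omega⟩) (a - 1) = CvC a t := by
  have hv1 : (1 : Fin n).val = 1 := by
    rw [Fin.val_one']
    exact Nat.mod_eq_of_lt (by omega)
  ext x
  simp only [cycIcc, CvC, Finset.mem_filter, Finset.mem_univ, true_and]
  set s : Fin n := ⟨n - t, by omega⟩ with hs
  have hsv : s.val = n - t := rfl
  rw [fin_sub_add_eq x a s, fin_sub_add_eq (a - 1) a s]
  have hw : (a - 1 - a).val = n - 1 := by
    have := a.isLt
    rw [fin_sub_val, fin_sub_val, hv1]
    split_ifs <;> omega
  rw [fin_sub_val (x - a) s, fin_sub_val (a - 1 - a) s, hw, hsv]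
  have := (x - a).isLt
  split_ifs <;> omega

end chains
open Submodule Module

lemma projS_apply {n : ℕ} (S : Finset (Fin n)) (x : Fin n → ℂ) (r : Fin n) :
    projS S x r = if r ∈ S then x r else 0 := by
  simp only [projS, LinearMap.pi_apply]
  split_ifs with h <;> simp [h]

lemma span_eq_span_of {V : Type*} [AddCommGroup V] [Module ℂ V] {s t : Set V}
    (h1 : s ⊆ insert 0 t) (h2 : t ⊆ insert 0 s) : span ℂ s = span ℂ t := by
  apply le_antisymm <;> rw [Submodule.span_le] <;> intro x hx
  · rcases h1 hx with rfl | hx'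
    · exact (span ℂ t).zero_mem
    · exact subset_span hx'
  · rcases h2 hx with rfl | hx'
    · exact (span ℂ s).zero_mem
    · exact subset_span hx'

lemma permSet_card {n : ℕ} (w : Equiv.Perm (Fin n)) (k : ℕ) (hk : k ≤ n) :
    (permSet w k).card = k := by
  classical
  rw [permSet, Finset.card_image_of_injective _ w.injective]
  have : Finset.univ.filter (fun x : Fin n => x.val < k) =
      (Finset.univ : Finset (Fin k)).map (Fin.castLEEmb hk) := by
    ext x
    simp only [Finset.mem_filter, Finset.mem_univ, true_and, Finset.mem_map]
    constructor
    · intro hx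
      exact ⟨⟨x.val, hx⟩, rfl⟩
    · rintro ⟨t, rfl⟩
      simpa [Fin.castLEEmb, Fin.castLE] using t.isLt
  rw [this, Finset.card_map, Finset.card_univ, Fintype.card_fin]

lemma projDim_eq_rrk {n : ℕ} (F : CompleteFlag n) (M : Matrix (Fin n) (Fin n) ℂ)
    (hM : IsFlagMatrix F M) (i : ℕ) (hi : i ≤ n) (S : Finset (Fin n)) :
    projDim S (F.space i) = rrk M i S := by
  classical
  set N : Matrix (Fin n) (Fin n) ℂ :=
    Matrix.of (fun r c => if r ∈ S ∧ c.val < i then M r c else 0) with hN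
  have key1 : (F.space i).map (projS S) = span ℂ (Set.range N.transpose) := by
    rw [← hM i hi, Submodule.map_span]
    apply span_eq_span_of
    · rintro y ⟨z, ⟨j, hj, rfl⟩, rfl⟩
      right
      refine ⟨j, ?_⟩
      funext r
      simp only [Matrix.transpose_apply, hN, Matrix.of_apply, projS_apply]
      rw [Set.mem_setOf_eq] at hj
      by_cases hr : r ∈ S <;> simp [hr, hj]
    · rintro y ⟨j, rfl⟩
      by_cases hj : j.val < i
      · right
        refine ⟨M.transpose j, ⟨j, hj, rfl⟩, ?_⟩
        funext r
        simp only [Matrix.transpose_apply, hN, Matrix.of_apply, projS_apply]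
        by_cases hr : r ∈ S <;> simp [hr, hj]
      · left
        funext r
        simp [hN, hj]
  have key2 : span ℂ (Set.range N) = span ℂ (rvec M i '' (S : Set (Fin n))) := by
    apply span_eq_span_of
    · rintro y ⟨r, rfl⟩
      by_cases hr : r ∈ S
      · right
        refine ⟨r, hr, ?_⟩
        funext c
        simp [hN, rvec, hr]
      · left
        funext c
        simp [hN, hr]
    · rintro y ⟨r, hr, rfl⟩
      right
      refine ⟨r, ?_⟩
      funext c
      simp [hN, rvec, Finset.mem_coe.mp hr]
  have hrank1 : N.rank = finrank ℂ (span ℂ (Set.range N.transpose)) :=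
    Matrix.rank_eq_finrank_span_cols N
  have hrank2 : N.rank = finrank ℂ (span ℂ (Set.range N)) :=
    Matrix.rank_eq_finrank_span_row N
  rw [projDim, key1, ← hrank1, hrank2, rrk, key2]
open Submodule Module

lemma minorP_ne_zero_iff {n : ℕ} (M : Matrix (Fin n) (Fin n) ℂ) (I : Finset (Fin n)) :
    minorP M I ≠ 0 ↔ rrk M I.card I = I.card := by
  classical
  have hkn : I.card ≤ n := by simpa using I.card_le_univ
  set A : Matrix (Fin I.card) (Fin I.card) ℂ :=
    M.submatrix (fun t : Fin I.card => I.orderEmbOfFin rfl t)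
      (fun t : Fin I.card => Fin.castLE (by simpa using I.card_le_univ) t) with hA
  set f : Fin I.card → (Fin n → ℂ) :=
    fun t => rvec M I.card (I.orderEmbOfFin rfl t) with hf
  have hΦ : (fun t : Fin I.card => A t) =
      (LinearMap.funLeft ℂ ℂ (Fin.castLE hkn)) ∘ f := by
    funext t
    funext s
    simp only [hA, Matrix.submatrix_apply, Function.comp_apply, LinearMap.funLeft_apply, hf,
      rvec, Fin.castLE]
    rw [if_pos s.isLt]
  have hindep : LinearIndependent ℂ (fun t : Fin I.card => A t) ↔ LinearIndependent ℂ f := by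
    constructor
    · intro h
      exact LinearIndependent.of_comp _ (hΦ ▸ h)
    · intro h
      rw [hΦ]
      apply h.map
      rw [Submodule.disjoint_def]
      have key : ∀ y ∈ span ℂ (Set.range f), ∀ c : Fin n, I.card ≤ c.val → y c = 0 := by
        intro y hy
        induction hy using Submodule.span_induction with
        | mem y hy =>
          obtain ⟨t, rfl⟩ := hy
          intro c hc
          simp only [hf, rvec]
          rw [if_neg (by omega)]
        | zero => intro c _; rfl
        | add y z hy hz hy' hz' => intro c hc; simp [hy' c hc, hz' c hc]
        | smul a y hy hy' => intro c hc; simp [hy' c hc]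
      intro x hx hker
      have hxQ : ∀ c : Fin n, I.card ≤ c.val → x c = 0 := key x hx
      have hker' : ∀ s : Fin I.card, x (Fin.castLE hkn s) = 0 := by
        intro s
        have := LinearMap.mem_ker.mp hker
        have := congrFun this s
        simpa [LinearMap.funLeft_apply] using this
      funext c
      by_cases hc : c.val < I.card
      · have := hker' ⟨c.val, hc⟩
        simpa using this
      · exact hxQ c (by omega)
  have hdet : minorP M I ≠ 0 ↔ LinearIndependent ℂ (fun t : Fin I.card => A t) := by
    rw [minorP, ← hA]
    rw [show (fun t : Fin I.card => A t) = A.row from rfl, Matrix.linearIndependent_rows_iff_isUnit, Matrix.isUnit_iff_isUnit_det,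
      isUnit_iff_ne_zero]
  have hspan : Set.range f = rvec M I.card '' (I : Set (Fin n)) := by
    rw [hf]
    rw [show (fun t : Fin I.card => rvec M I.card (I.orderEmbOfFin rfl t)) =
      rvec M I.card ∘ (I.orderEmbOfFin rfl) from rfl]
    rw [Set.range_comp, Finset.range_orderEmbOfFin]
  rw [hdet, hindep, linearIndependent_iff_card_eq_finrank_span, Fintype.card_fin,
    Set.finrank, hspan, rrk, eq_comm]

/-- `T°_{u,v,a}` is the locus in `T_{u,v,a}` where all Plücker coordinates
`P_{u[k]}` and `P_{v[k]}` are nonzero. -/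
theorem open_cell_eq_nonvanishing (n : ℕ) [NeZero n] (hn : 2 ≤ n)
    (u v : Equiv.Perm (Fin n)) (a : ℕ → Fin n)
    (ha : ∀ i, 1 ≤ i → i ≤ n - 1 → shiftedGaleLE (a i) (permSet u i) (permSet v i))
    (F : CompleteFlag n) (M : Matrix (Fin n) (Fin n) ℂ) (hM : IsFlagMatrix F M) :
    memT0 u v a F ↔
      (memT u v a F ∧ ∀ k : ℕ, 1 ≤ k → k ≤ n - 1 →
        minorP M (permSet u k) ≠ 0 ∧ minorP M (permSet v k) ≠ 0) := by
  classical
  constructor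
  · intro h0
    have hT : memT u v a F := by
      intro i h1 h2 j
      exact ⟨(h0 i h1 h2 j).1.le, (h0 i h1 h2 j).2.le⟩
    refine ⟨hT, ?_⟩
    intro k hk1 hk2
    have hkn : k ≤ n := by omega
    constructor
    · -- u-minor
      rw [minorP_ne_zero_iff, permSet_card u k hkn]
      have hchain := rrk_chain (M := M) (i := k) (permSet u k) (SuC (a k)) (SuC_zero (a k))
        (fun t ht => ⟨a k + ⟨t, ht⟩, SuC_not_mem (a k) t ht, SuC_succ (a k) t ht⟩)
        (fun t ht => ?_) n le_rfl
      · rw [SuC_top, Finset.inter_univ, permSet_card u k hkn] at hchain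
        exact hchain
      · rcases Nat.eq_zero_or_pos t with rfl | htpos
        · rw [SuC_zero]
          simp [rrk_empty]
        · rw [← SuC_eq_cycIcc (a k) t htpos ht, ← projDim_eq_rrk F M hM k hkn]
          exact (h0 k hk1 hk2 _).1
    · -- v-minor
      rw [minorP_ne_zero_iff, permSet_card v k hkn]
      have hchain := rrk_chain (M := M) (i := k) (permSet v k) (CvC (a k)) (CvC_zero (a k))
        (fun t ht => ⟨a k + ⟨n - 1 - t, by omega⟩, CvC_not_mem (a k) t ht, CvC_succ (a k) t ht⟩)
        (fun t ht => ?_) n le_rfl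
      · rw [CvC_top (a k) (by omega), Finset.inter_univ, permSet_card v k hkn] at hchain
        exact hchain
      · rcases Nat.eq_zero_or_pos t with rfl | htpos
        · rw [CvC_zero]
          simp [rrk_empty]
        · rw [← CvC_eq_cycIcc (a k) t hn htpos ht, ← projDim_eq_rrk F M hM k hkn]
          exact (h0 k hk1 hk2 _).2
  · rintro ⟨hT, hmin⟩
    intro i h1 h2 j
    have hin : i ≤ n := by omega
    obtain ⟨hu0, hv0⟩ := hmin i h1 h2
    rw [minorP_ne_zero_iff] at hu0 hv0
    have hBu : rrk M i (permSet u i) = (permSet u i).card := by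
      rw [permSet_card u i hin] at hu0 ⊢
      exact hu0
    have hBv : rrk M i (permSet v i) = (permSet v i).card := by
      rw [permSet_card v i hin] at hv0 ⊢
      exact hv0
    constructor
    · have hle := (hT i h1 h2 j).1
      rw [projDim_eq_rrk F M hM i hin] at hle ⊢
      exact rrk_eq_of_basis hBu hle
    · have hle := (hT i h1 h2 j).2
      rw [projDim_eq_rrk F M hM i hin] at hle ⊢
      exact rrk_eq_of_basis hBv hle
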